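/- For all real λ₁, λ₂ ∈ [0,2] and all δ₁ ∈ [0,1], with α = √(2/(2-δ₁)) - 1 (so that α ∈ [0,1]), the inequality -α((λ₁²-1)/2 + (λ₂²-1)/2 + δ₁) - (1-α)((λ₁-1)²/4 + (λ₂-1)²/4) ≤ 2√(2(2-δ₁)) - 4 + δ₁ holds. -/
import Mathlib


theorem optimal_alpha_inequality (δ₁ lam₁ lam₂ α : ℝ)
    (hδ : δ₁ ∈ Set.Icc (0:ℝ) 1)
    (h1 : lam₁ ∈ Set.Icc (0:ℝ) 2) (h2 : lam₂ ∈ Set.Icc (0:ℝ) 2)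
    (hα : α = Real.sqrt (2 / (2 - δ₁)) - 1) :
    -α * ((lam₁ ^ 2 - 1) / 2 + (lam₂ ^ 2 - 1) / 2 + δ₁)
      - (1 - α) * ((lam₁ - 1) ^ 2 / 4 + (lam₂ - 1) ^ 2 / 4)
      ≤ 2 * Real.sqrt (2 * (2 - δ₁)) - 4 + δ₁ := by
  obtain ⟨hδ0, hδ1⟩ := hδ
  have h2δ : (0:ℝ) < 2 - δ₁ := by linarith
  set s := Real.sqrt (2 / (2 - δ₁)) with hs
  have hs2 : s ^ 2 = 2 / (2 - δ₁) := Real.sq_sqrt (by positivity)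
  have hseq : s ^ 2 * (2 - δ₁) = 2 := by
    rw [hs2]; field_simp
  have hsnn : 0 ≤ s := Real.sqrt_nonneg _
  have hs1 : 1 ≤ s := by nlinarith
  have hs0 : 0 < s := by linarith
  have hsqrt : Real.sqrt (2 * (2 - δ₁)) = s * (2 - δ₁) := by
    rw [show 2 * (2 - δ₁) = (s * (2 - δ₁)) ^ 2 by nlinarith]
    exact Real.sqrt_sq (by positivity)
  rw [hα, hsqrt]
  nlinarith [mul_nonneg h2δ.le (sq_nonneg (s * lam₁ - (2 - s))),
    mul_nonneg h2δ.le (sq_nonneg (s * lam₂ - (2 - s))),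
    sq_nonneg (s * lam₁ - (2 - s)), sq_nonneg (s * lam₂ - (2 - s)), hseq, hs0, hs1]
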